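/- If a prover strategy in one iteration of the 3-challenge Stern protocol can produce valid responses to all three challenges (for the same commitments c₁, c₂, c₃ under a perfectly binding commitment), then from those responses one can extract a vector x with Hxᵀ = yᵀ and wt(x) = w. Concretely: if there exist a permutation π and vectors u, z, a, b ∈ F_2^n with (i) Huᵀ committed in c₁ and π[u] committed in c₂ (challenge 0), (ii) Hzᵀ − yᵀ committed in c₁ and π[z] committed in c₃ (challenge 1), and (iii) a committed in c₂, a + b committed in c₃, wt(b) = w (challenge 2), then binding forces a = π[u], π[z] = π[u] + b, and hence x := π^{-1}[b] satisfies Hxᵀ = yᵀ and wt(x) = w. -/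

import Mathlib

/-!
Binding of `com₂` and `com₃` turns the responses to challenges 0 and 2 into `π[z] = π[u] + b`,
so `π⁻¹[b] = z - u`; binding of `com₁` gives `Hu = Hz - y`, hence `H(z - u) = y`. The weight
of `b` survives the permutation because the Hamming weight is permutation invariant.
-/

def wt {n : ℕ} (x : Fin n → ZMod 2) : ℕ :=
  (Finset.univ.filter fun i => x i ≠ 0).card

theorem hammingNorm_comp_equiv {ι κ β : Type*} [Fintype ι] [Fintype κ] [Zero β]
    [DecidableEq β] (e : κ ≃ ι) (x : ι → β) : hammingNorm (x ∘ e) = hammingNorm x := by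
  simp only [hammingNorm, Finset.card_filter, Function.comp_apply]
  exact e.sum_comp fun i => if x i ≠ 0 then 1 else 0

theorem wt_eq_hammingNorm {n : ℕ} (x : Fin n → ZMod 2) : wt x = hammingNorm x := by
  unfold wt hammingNorm
  congr

theorem wt_comp_perm {n : ℕ} (x : Fin n → ZMod 2) (σ : Equiv.Perm (Fin n)) :
    wt (x ∘ σ) = wt x := by
  rw [wt_eq_hammingNorm, wt_eq_hammingNorm, hammingNorm_comp_equiv]

theorem comp_perm_inv_eq_sub_of_comp_perm_eq_add {α G : Type*} [AddCommGroup G]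
    (π : Equiv.Perm α) {u z b : α → G} (h : z ∘ π = u ∘ π + b) : b ∘ ⇑π⁻¹ = z - u := by
  funext i
  have hi := congrFun h (π.symm i)
  simp only [Function.comp_apply, Pi.add_apply, Equiv.apply_symm_apply] at hi
  rw [Function.comp_apply, Equiv.Perm.coe_inv, Pi.sub_apply, hi, add_sub_cancel_left]

/-- Knowledge extraction for one iteration of the 3-challenge Stern protocol with
perfectly binding commitments (modeled as injective commitment functions): from
valid responses to all three challenges one extracts `x := π⁻¹[b]` with
`Hxᵀ = yᵀ` and `wt x = w`. -/
theorem stern_extraction {n k w : ℕ} {C : Type*}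
    (H : Matrix (Fin (n - k)) (Fin n) (ZMod 2)) (y : Fin (n - k) → ZMod 2)
    (com₁ : (Fin (n - k) → ZMod 2) → C) (com₂ com₃ : (Fin n → ZMod 2) → C)
    (h₁ : Function.Injective com₁) (h₂ : Function.Injective com₂)
    (h₃ : Function.Injective com₃)
    (c₁ c₂ c₃ : C) (π : Equiv.Perm (Fin n)) (u z a b : Fin n → ZMod 2)
    -- challenge 0: `Huᵀ` committed in `c₁`, `π[u]` committed in `c₂`
    (hc₁u : c₁ = com₁ (H.mulVec u)) (hc₂u : c₂ = com₂ (u ∘ π))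
    -- challenge 1: `Hzᵀ − yᵀ` committed in `c₁`, `π[z]` committed in `c₃`
    (hc₁z : c₁ = com₁ (H.mulVec z - y)) (hc₃z : c₃ = com₃ (z ∘ π))
    -- challenge 2: `a` committed in `c₂`, `a + b` committed in `c₃`, `wt b = w`
    (hc₂a : c₂ = com₂ a) (hc₃ab : c₃ = com₃ (a + b)) (hb : wt b = w) :
    a = u ∘ π ∧ z ∘ π = u ∘ π + b ∧
      H.mulVec (b ∘ ⇑π⁻¹) = y ∧ wt (b ∘ ⇑π⁻¹) = w := by
  have ha : a = u ∘ π := h₂ (hc₂a.symm.trans hc₂u)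
  have hzu : z ∘ π = u ∘ π + b := ha ▸ h₃ (hc₃z.symm.trans hc₃ab)
  have hHu : H.mulVec u = H.mulVec z - y := h₁ (hc₁u.symm.trans hc₁z)
  have hx : b ∘ ⇑π⁻¹ = z - u := comp_perm_inv_eq_sub_of_comp_perm_eq_add π hzu
  refine ⟨ha, hzu, ?_, ?_⟩
  · rw [hx, Matrix.mulVec_sub, hHu, sub_sub_cancel]
  · rw [wt_comp_perm, hb]
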